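/- Let G be a connected biclique graph (G = KB(H) for some H, with G ≠ K3 and G ≠ diamond). Then no two vertices of degree 2 in G are adjacent. -/

import Mathlib

open SimpleGraph

variable {V : Type*}

/-- `S` is the vertex set of an induced complete bipartite subgraph of `G`. -/
def IsCompleteBipartiteSet (G : SimpleGraph V) (S : Set V) : Prop :=
  ∃ X Y : Set V, X.Nonempty ∧ Y.Nonempty ∧ S = X ∪ Y ∧ Disjoint X Y ∧
    ∀ a ∈ S, ∀ b ∈ S, (G.Adj a b ↔ ((a ∈ X ∧ b ∈ Y) ∨ (a ∈ Y ∧ b ∈ X)))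

/-- A biclique of `G`: a maximal induced complete bipartite subgraph,
identified with its vertex set. -/
def IsBiclique (G : SimpleGraph V) (S : Set V) : Prop :=
  IsCompleteBipartiteSet G S ∧
    ∀ T : Set V, IsCompleteBipartiteSet G T → S ⊆ T → T = S

/-- The biclique graph `KB(G)`: the intersection graph of the bicliques of `G`. -/
def KB (G : SimpleGraph V) : SimpleGraph {S : Set V // IsBiclique G S} where
  Adj A B := A ≠ B ∧ (A.1 ∩ B.1).Nonempty
  symm := by
    constructor
    intro A B h
    exact ⟨Ne.symm h.1, by rw [Set.inter_comm]; exact h.2⟩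
  loopless := by
    constructor
    intro A h
    exact h.1 rfl

/-- The distance between two bicliques (vertex sets) of `G`:
`min { d_G(b,b') : b ∈ B, b' ∈ B' }`. -/
noncomputable def bicliqueDist (G : SimpleGraph V) (B B' : Set V) : ℕ :=
  sInf {k : ℕ | ∃ b ∈ B, ∃ b' ∈ B', G.dist b b' = k}

/-- The diamond: `K4` minus an edge (the edge between vertices 2 and 3 is missing). -/
def diamondGraph : SimpleGraph (Fin 4) :=
  SimpleGraph.fromEdgeSet {s(0, 1), s(0, 2), s(0, 3), s(1, 2), s(1, 3)}

/-- The Hajós graph: a triangle `0,1,2` plus vertices `3,4,5`, where `3` is adjacent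
to exactly `0,1`, `4` to exactly `1,2`, and `5` to exactly `2,0`. -/
def hajosGraph : SimpleGraph (Fin 6) :=
  SimpleGraph.fromEdgeSet
    {s(0, 1), s(1, 2), s(0, 2), s(3, 0), s(3, 1), s(4, 1), s(4, 2), s(5, 2), s(5, 0)}

lemma pair_cbs (G : SimpleGraph V) (x y : V) (h : G.Adj x y) : IsCompleteBipartiteSet G {x, y} := by
  have hxy : x ≠ y := h.ne
  refine ⟨{x}, {y}, by simp, by simp, (Set.singleton_union).symm, by simp [hxy], ?_⟩
  intro a ha b hb
  simp only [Set.mem_insert_iff, Set.mem_singleton_iff] at ha hb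
  rcases ha with rfl | rfl <;> rcases hb with rfl | rfl <;>
    simp [h, h.symm, hxy, hxy.symm]

lemma path_cbs (G : SimpleGraph V) {x y z : V} (hxz : G.Adj x z) (hzy : G.Adj z y)
    (hxy : ¬ G.Adj x y) (hne : x ≠ y) : IsCompleteBipartiteSet G {x, y, z} := by
  have hyx : ¬ G.Adj y x := fun h => hxy h.symm
  refine ⟨{z}, {x, y}, by simp, by simp, ?_, ?_, ?_⟩
  · ext t
    simp only [Set.mem_insert_iff, Set.mem_singleton_iff, Set.mem_union]
    tauto
  · rw [Set.disjoint_singleton_left]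
    simp [hxz.ne.symm, hzy.ne]
  · intro a ha b hb
    simp only [Set.mem_insert_iff, Set.mem_singleton_iff] at ha hb
    rcases ha with rfl | rfl | rfl <;> rcases hb with rfl | rfl | rfl <;>
      simp [hxz, hxz.symm, hzy, hzy.symm, hxy, hyx, hne, hne.symm, hxz.ne, hxz.ne.symm,
        hzy.ne, hzy.ne.symm]

lemma cbs_part {G : SimpleGraph V} {S : Set V} (hS : IsCompleteBipartiteSet G S) :
    ∃ X : Set V, ∀ a ∈ S, ∀ b ∈ S, (G.Adj a b ↔ ¬ (a ∈ X ↔ b ∈ X)) := by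
  obtain ⟨X, Y, -, -, rfl, hXY, h⟩ := hS
  refine ⟨X, fun a ha b hb => ?_⟩
  rw [h a ha b hb]
  have ha' : a ∈ X → a ∉ Y := fun h1 h2 => Set.disjoint_left.mp hXY h1 h2
  have hb' : b ∈ X → b ∉ Y := fun h1 h2 => Set.disjoint_left.mp hXY h1 h2
  have ha2 : a ∈ X ∨ a ∈ Y := ha
  have hb2 : b ∈ X ∨ b ∈ Y := hb
  tauto

lemma cbs_exists_adj {G : SimpleGraph V} {S : Set V} (hS : IsCompleteBipartiteSet G S)
    {s : V} (hs : s ∈ S) : ∃ t ∈ S, G.Adj s t := by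
  obtain ⟨X, Y, hX, hY, rfl, hXY, h⟩ := hS
  rcases hs with hsX | hsY
  · obtain ⟨y, hy⟩ := hY
    exact ⟨y, Or.inr hy, (h s (Or.inl hsX) y (Or.inr hy)).mpr (Or.inl ⟨hsX, hy⟩)⟩
  · obtain ⟨x, hx⟩ := hX
    exact ⟨x, Or.inl hx, (h s (Or.inr hsY) x (Or.inl hx)).mpr (Or.inr ⟨hsY, hx⟩)⟩

lemma cbs_tri {G : SimpleGraph V} {S : Set V} (hS : IsCompleteBipartiteSet G S)
    {a b c : V} (ha : a ∈ S) (hb : b ∈ S) (hc : c ∈ S)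
    (hab : G.Adj a b) (hbc : G.Adj b c) (hac : G.Adj a c) : False := by
  obtain ⟨X, hX⟩ := cbs_part hS
  have h1 := (hX _ ha _ hb).mp hab
  have h2 := (hX _ hb _ hc).mp hbc
  have h3 := (hX _ ha _ hc).mp hac
  tauto

lemma cbs_same {G : SimpleGraph V} {S : Set V} (hS : IsCompleteBipartiteSet G S)
    {a b c : V} (ha : a ∈ S) (hb : b ∈ S) (hc : c ∈ S) (hac : ¬ G.Adj a c) :
    G.Adj a b ↔ G.Adj c b := by
  obtain ⟨X, hX⟩ := cbs_part hS
  rw [hX _ ha _ hb, hX _ hc _ hb]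
  have h3 : ¬ ¬ (a ∈ X ↔ c ∈ X) := fun h => hac ((hX _ ha _ hc).mpr h)
  tauto

lemma exists_biclique_superset [Finite V] (G : SimpleGraph V) (S : Set V)
    (hS : IsCompleteBipartiteSet G S) : ∃ T : Set V, IsBiclique G T ∧ S ⊆ T := by
  obtain ⟨M, hM, hmax⟩ := Set.Finite.exists_maximalFor (fun T => T.ncard)
      {T : Set V | IsCompleteBipartiteSet G T ∧ S ⊆ T} (Set.toFinite _) ⟨S, hS, subset_rfl⟩
  refine ⟨M, ⟨hM.1, ?_⟩, hM.2⟩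
  intro T hT hMT
  have hle : M.ncard ≤ T.ncard := Set.ncard_le_ncard hMT (Set.toFinite _)
  have heq := hmax ⟨hT, hM.2.trans hMT⟩ hle
  exact (Set.eq_of_subset_of_ncard_le hMT heq.ge (Set.toFinite _)).symm

lemma exists_biclique_pair [Finite V] (G : SimpleGraph V) (x y : V) (h : G.Adj x y) :
    ∃ T : Set V, IsBiclique G T ∧ x ∈ T ∧ y ∈ T := by
  obtain ⟨T, hT, hsub⟩ := exists_biclique_superset G {x, y} (pair_cbs G x y h)
  exact ⟨T, hT, hsub (by simp), hsub (by simp)⟩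

lemma exists_biclique_near [Finite V] (G : SimpleGraph V) {s t : V} (hst : s ≠ t)
    (hnear : G.Adj s t ∨ ∃ z, G.Adj s z ∧ G.Adj z t) :
    ∃ T : Set V, IsBiclique G T ∧ s ∈ T ∧ t ∈ T := by
  by_cases h : G.Adj s t
  · exact exists_biclique_pair G s t h
  · rcases hnear with h' | ⟨z, hsz, hzt⟩
    · exact absurd h' h
    · obtain ⟨T, hT, hsub⟩ := exists_biclique_superset G _ (path_cbs G hsz hzt h hst)
      exact ⟨T, hT, hsub (by simp), hsub (by simp)⟩

/-- In a connected biclique graph `G = KB(H)` that is neither `K₃` nor the diamond, no two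
vertices of degree `2` are adjacent. -/
theorem degree_two_vertices_not_adjacent
    {V W : Type*} [Fintype V] [Fintype W] (H : SimpleGraph W) (G : SimpleGraph V)
    [DecidableRel G.Adj] (iso : G ≃g KB H) (hG : G.Connected)
    (hK3 : IsEmpty (G ≃g (⊤ : SimpleGraph (Fin 3))))
    (hdia : IsEmpty (G ≃g diamondGraph)) :
    ∀ u v : V, G.degree u = 2 → G.degree v = 2 → ¬ G.Adj u v := by
  classical
  intro u v hu hv huv
  -- the neighbors of u are exactly {v, c0}
  obtain ⟨c0, hc0v, hNu⟩ : ∃ c0, c0 ≠ v ∧ G.neighborFinset u = {v, c0} := by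
    obtain ⟨a, b, hab, hset⟩ := Finset.card_eq_two.mp hu
    have hvmem : v ∈ G.neighborFinset u := (G.mem_neighborFinset u v).mpr huv
    rw [hset] at hvmem
    simp only [Finset.mem_insert, Finset.mem_singleton] at hvmem
    rcases hvmem with rfl | rfl
    · exact ⟨b, fun h => hab h.symm, hset⟩
    · exact ⟨a, fun h => hab h, by rw [hset, Finset.pair_comm]⟩
  obtain ⟨d0, hd0u, hNv⟩ : ∃ d0, d0 ≠ u ∧ G.neighborFinset v = {u, d0} := by
    obtain ⟨a, b, hab, hset⟩ := Finset.card_eq_two.mp hv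
    have humem : u ∈ G.neighborFinset v := (G.mem_neighborFinset v u).mpr huv.symm
    rw [hset] at humem
    simp only [Finset.mem_insert, Finset.mem_singleton] at humem
    rcases humem with rfl | rfl
    · exact ⟨b, fun h => hab h.symm, hset⟩
    · exact ⟨a, fun h => hab h, by rw [hset, Finset.pair_comm]⟩
  have hAdju : ∀ x, G.Adj u x → x = v ∨ x = c0 := by
    intro x hx
    have : x ∈ G.neighborFinset u := (G.mem_neighborFinset u x).mpr hx
    rw [hNu] at this; simpa using this
  have hAdjv : ∀ x, G.Adj v x → x = u ∨ x = d0 := by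
    intro x hx
    have : x ∈ G.neighborFinset v := (G.mem_neighborFinset v x).mpr hx
    rw [hNv] at this; simpa using this
  have huc0 : G.Adj u c0 := by
    have : c0 ∈ G.neighborFinset u := by rw [hNu]; simp
    exact (G.mem_neighborFinset u c0).mp this
  have hvd0 : G.Adj v d0 := by
    have : d0 ∈ G.neighborFinset v := by rw [hNv]; simp
    exact (G.mem_neighborFinset v d0).mp this
  -- biclique sets
  set A : Set W := (iso u).1 with hA
  set B : Set W := (iso v).1 with hB
  set C : Set W := (iso c0).1 with hC
  set D : Set W := (iso d0).1 with hD
  have hAbic : IsBiclique H A := (iso u).2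
  have hBbic : IsBiclique H B := (iso v).2
  have hCbic : IsBiclique H C := (iso c0).2
  have key : ∀ (x : V) (T : {S : Set W // IsBiclique H S}), (KB H).Adj (iso x) T ↔ G.Adj x (iso.symm T) := by
    intro x T
    conv_lhs => rw [← iso.apply_symm_apply T]
    exact iso.map_adj_iff
  have hadjAB : (KB H).Adj (iso u) (iso v) := iso.map_adj_iff.mpr huv
  have hadjAC : (KB H).Adj (iso u) (iso c0) := iso.map_adj_iff.mpr huc0
  have hadjBD : (KB H).Adj (iso v) (iso d0) := iso.map_adj_iff.mpr hvd0
  have haAB : (A ∩ B).Nonempty := hadjAB.2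
  obtain ⟨a, haA, haB⟩ := haAB
  -- classification of bicliques meeting A and meeting B
  have meetsA : ∀ T : Set W, (hT : IsBiclique H T) → (A ∩ T).Nonempty → T = A ∨ T = B ∨ T = C := by
    intro T hT hmeet
    by_cases hTA : (⟨T, hT⟩ : {S : Set W // IsBiclique H S}) = iso u
    · exact Or.inl (congrArg Subtype.val hTA)
    · have hadj : (KB H).Adj (iso u) ⟨T, hT⟩ := ⟨fun h => hTA h.symm, hmeet⟩
      have := hAdju _ ((key u ⟨T, hT⟩).mp hadj)
      rcases this with h | h
      · refine Or.inr (Or.inl (congrArg Subtype.val (?_ : (⟨T, hT⟩ : {S : Set W // IsBiclique H S}) = iso v)))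
        rw [← h, iso.apply_symm_apply]
      · refine Or.inr (Or.inr (congrArg Subtype.val (?_ : (⟨T, hT⟩ : {S : Set W // IsBiclique H S}) = iso c0)))
        rw [← h, iso.apply_symm_apply]
  have meetsB : ∀ T : Set W, (hT : IsBiclique H T) → (B ∩ T).Nonempty → T = B ∨ T = A ∨ T = D := by
    intro T hT hmeet
    by_cases hTB : (⟨T, hT⟩ : {S : Set W // IsBiclique H S}) = iso v
    · exact Or.inl (congrArg Subtype.val hTB)
    · have hadj : (KB H).Adj (iso v) ⟨T, hT⟩ := ⟨fun h => hTB h.symm, hmeet⟩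
      have := hAdjv _ ((key v ⟨T, hT⟩).mp hadj)
      rcases this with h | h
      · refine Or.inr (Or.inl (congrArg Subtype.val (?_ : (⟨T, hT⟩ : {S : Set W // IsBiclique H S}) = iso u)))
        rw [← h, iso.apply_symm_apply]
      · refine Or.inr (Or.inr (congrArg Subtype.val (?_ : (⟨T, hT⟩ : {S : Set W // IsBiclique H S}) = iso d0)))
        rw [← h, iso.apply_symm_apply]
  -- distinctness at the set level
  have hinj : Function.Injective iso := iso.toEquiv.injective
  have hCA : C ≠ A := fun h => huc0.ne (hinj (Subtype.ext h)).symm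
  have hCB : C ≠ B := fun h => hc0v (hinj (Subtype.ext h))
  have hDA : D ≠ A := fun h => hd0u (hinj (Subtype.ext h))
  have hDB : D ≠ B := fun h => hvd0.ne (hinj (Subtype.ext h)).symm
  -- Step 1: C = D
  have hCD : C = D := by
    by_contra hne
    have hCB_empty : ∀ t ∈ C, t ∉ B := by
      intro t htC htB
      rcases meetsB C hCbic ⟨t, htB, htC⟩ with h | h | h
      · exact hCB h
      · exact hCA h
      · exact hne h
    have hAB3 : ∀ T : Set W, IsBiclique H T → ∀ s t, s ∈ A → t ∈ B → s ∈ T → t ∈ T →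
        T = A ∨ T = B := by
      intro T hT s t hsA htB hsT htT
      rcases meetsA T hT ⟨s, hsA, hsT⟩ with h | h | h
      · exact Or.inl h
      · exact Or.inr h
      · exact (hCB_empty t (h ▸ htT) htB).elim
    obtain ⟨c, hcA, hcC⟩ := hadjAC.2
    obtain ⟨s, hsA, hsB, c', hc'A, hc'C, hsc'⟩ :
        ∃ s, s ∈ A ∧ s ∈ B ∧ ∃ c', c' ∈ A ∧ c' ∈ C ∧ H.Adj s c' := by
      by_cases hac : H.Adj a c
      · exact ⟨a, haA, haB, c, hcA, hcC, hac⟩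
      obtain ⟨r, hrA, har⟩ := cbs_exists_adj hAbic.1 haA
      have hcr : H.Adj c r := (cbs_same hAbic.1 haA hrA hcA hac).mp har
      by_cases hrB : r ∈ B
      · exact ⟨r, hrA, hrB, c, hcA, hcC, hcr.symm⟩
      by_cases hrC : r ∈ C
      · exact ⟨a, haA, haB, r, hrA, hrC, har⟩
      obtain ⟨y, hyB, hay⟩ := cbs_exists_adj hBbic.1 haB
      have hyA : y ∈ A := by
        by_cases hyr : H.Adj y r
        · obtain ⟨T, hT, hyT, hrT⟩ := exists_biclique_pair H y r hyr
          rcases hAB3 T hT r y hrA hyB hrT hyT with h | h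
          · exact (cbs_tri hAbic.1 haA (h ▸ hyT) hrA hay hyr har).elim
          · exact (hrB (h ▸ hrT)).elim
        · have hyr' : y ≠ r := fun h => hrB (h ▸ hyB)
          obtain ⟨T, hT, hyT, hrT⟩ := exists_biclique_near H hyr' (Or.inr ⟨a, hay.symm, har⟩)
          rcases hAB3 T hT r y hrA hyB hrT hyT with h | h
          · exact h ▸ hyT
          · exact (hrB (h ▸ hrT)).elim
      exact ⟨y, hyA, hyB, c, hcA, hcC, ((cbs_same hAbic.1 haA hyA hcA hac).mp hay).symm⟩
    have hsC : s ∉ C := fun h => hCB_empty s h hsB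
    have hc'B : c' ∉ B := hCB_empty c' hc'C
    have hNC : ∀ n, n ∈ C → H.Adj c' n → n ∈ A := by
      intro n hnC hcn
      have hnB : n ∉ B := hCB_empty n hnC
      have hns : n ≠ s := fun h => hsC (h ▸ hnC)
      obtain ⟨T, hT, hnT, hsT⟩ := exists_biclique_near H hns (Or.inr ⟨c', hcn.symm, hsc'.symm⟩)
      rcases hAB3 T hT s s hsA hsB hsT hsT with h | h
      · exact h ▸ hnT
      · exact (hnB (h ▸ hnT)).elim
    obtain ⟨z', hz'C, hz'A⟩ : ∃ z', z' ∈ C ∧ z' ∉ A := by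
      by_contra hcon
      push_neg at hcon
      exact hCA (hCbic.2 A hAbic.1 hcon).symm
    have hz'B : z' ∉ B := hCB_empty z' hz'C
    obtain ⟨n, hnC, hc'n⟩ := cbs_exists_adj hCbic.1 hc'C
    have hnA : n ∈ A := hNC n hnC hc'n
    have hc'z' : ¬ H.Adj c' z' := fun h => hz'A (hNC z' hz'C h)
    have hz'n : H.Adj z' n := (cbs_same hCbic.1 hc'C hnC hz'C hc'z').mp hc'n
    obtain ⟨y, hyB, hsy⟩ := cbs_exists_adj hBbic.1 hsB
    have hyc' : ¬ H.Adj y c' := by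
      intro hyc
      obtain ⟨T, hT, hyT, hcT⟩ := exists_biclique_pair H y c' hyc
      rcases meetsA T hT ⟨c', hc'A, hcT⟩ with h | h | h
      · exact cbs_tri hAbic.1 hsA (h ▸ hyT) hc'A hsy hyc hsc'
      · exact hc'B (h ▸ hcT)
      · exact hCB_empty y (h ▸ hyT) hyB
    have hyc'ne : y ≠ c' := fun h => hc'B (h ▸ hyB)
    obtain ⟨T, hT, hyT, hcT⟩ := exists_biclique_near H hyc'ne (Or.inr ⟨s, hsy.symm, hsc'⟩)
    have hyA : y ∈ A := by
      rcases meetsA T hT ⟨c', hc'A, hcT⟩ with h | h | h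
      · exact h ▸ hyT
      · exact (hc'B (h ▸ hcT)).elim
      · exact (hCB_empty y (h ▸ hyT) hyB).elim
    have hyn : H.Adj y n := (cbs_same hAbic.1 hc'A hnA hyA (fun h => hyc' h.symm)).mp hc'n
    have hyz' : y ≠ z' := fun h => hz'A (h ▸ hyA)
    obtain ⟨T', hT', hyT', hz'T'⟩ := exists_biclique_near H hyz' (Or.inr ⟨n, hyn, hz'n.symm⟩)
    rcases hAB3 T' hT' y y hyA hyB hyT' hyT' with h | h
    · exact hz'A (h ▸ hz'T')
    · exact hz'B (h ▸ hz'T')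
  -- Step 2: every biclique meeting C is A, B or C
  have hCnb : ∀ T : Set W, IsBiclique H T → (C ∩ T).Nonempty → T = A ∨ T = B ∨ T = C := by
    intro T hT hmeet
    by_contra hcon
    push_neg at hcon
    obtain ⟨hTA, hTB, hTC⟩ := hcon
    have hGood : ∀ T' : Set W, IsBiclique H T' → ∀ s t, s ∈ T' → t ∈ T' → (s ∈ A ∨ s ∈ B) →
        t ∉ A → t ∉ B → T' = C := by
      intro T' hT' s t hsT htT hs htA htB
      rcases hs with hsA | hsB
      · rcases meetsA T' hT' ⟨s, hsA, hsT⟩ with h | h | h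
        · exact (htA (h ▸ htT)).elim
        · exact (htB (h ▸ htT)).elim
        · exact h
      · rcases meetsB T' hT' ⟨s, hsB, hsT⟩ with h | h | h
        · exact (htB (h ▸ htT)).elim
        · exact (htA (h ▸ htT)).elim
        · exact h.trans hCD.symm
    have hnear : ∀ s t, (s ∈ A ∨ s ∈ B) → t ∉ A → t ∉ B → (∃ z, H.Adj s z ∧ H.Adj z t) →
        s ∈ C ∧ t ∈ C := by
      intro s t hs htA htB hz
      have hst : s ≠ t := by
        intro h
        rcases hs with hs | hs
        · exact htA (h ▸ hs)
        · exact htB (h ▸ hs)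
      obtain ⟨T', hT', hsT, htT⟩ := exists_biclique_near H hst (Or.inr hz)
      have h := hGood T' hT' s t hsT htT hs htA htB
      exact ⟨h ▸ hsT, h ▸ htT⟩
    have hnearE : ∀ s t, (s ∈ A ∨ s ∈ B) → t ∉ A → t ∉ B → H.Adj s t → s ∈ C ∧ t ∈ C := by
      intro s t hs htA htB hst
      obtain ⟨T', hT', hsT, htT⟩ := exists_biclique_pair H s t hst
      have h := hGood T' hT' s t hsT htT hs htA htB
      exact ⟨h ▸ hsT, h ▸ htT⟩
    have hTnA : ∀ t ∈ T, t ∉ A := by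
      intro t htT htA
      rcases meetsA T hT ⟨t, htA, htT⟩ with h | h | h
      exacts [hTA h, hTB h, hTC h]
    have hTnB : ∀ t ∈ T, t ∉ B := by
      intro t htT htB
      rcases meetsB T hT ⟨t, htB, htT⟩ with h | h | h
      exacts [hTB h, hTA h, hTC (h.trans hCD.symm)]
    obtain ⟨m, hmC, hmT⟩ := hmeet
    obtain ⟨w, hwT, hwC⟩ : ∃ w, w ∈ T ∧ w ∉ C := by
      by_contra hc
      push_neg at hc
      exact hTC (hT.2 C hCbic.1 hc).symm
    have hmA := hTnA m hmT
    have hmB := hTnB m hmT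
    obtain ⟨g, hgC, hg, hgm⟩ : ∃ g, g ∈ C ∧ (g ∈ A ∨ g ∈ B) ∧ H.Adj g m := by
      obtain ⟨p, hpA, hpC⟩ := hadjAC.2
      by_cases hpm : H.Adj p m
      · exact ⟨p, hpC, Or.inl hpA, hpm⟩
      obtain ⟨n, hnC, hmn⟩ := cbs_exists_adj hCbic.1 hmC
      have hpn : H.Adj p n := (cbs_same hCbic.1 hpC hnC hmC hpm).mpr hmn
      by_cases hnG : n ∈ A ∨ n ∈ B
      · exact ⟨n, hnC, hnG, hmn.symm⟩
      push_neg at hnG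
      obtain ⟨q, hqA, hpq⟩ := cbs_exists_adj hAbic.1 hpA
      have hqn : ¬ H.Adj q n := by
        intro hqn
        have hqC := (hnearE q n (Or.inl hqA) hnG.1 hnG.2 hqn).1
        exact cbs_tri hCbic.1 hqC hpC hnC hpq.symm hpn hqn
      have hqC : q ∈ C := (hnear q n (Or.inl hqA) hnG.1 hnG.2 ⟨p, hpq.symm, hpn⟩).1
      exact ⟨q, hqC, Or.inl hqA, ((cbs_same hCbic.1 hpC hqC hmC hpm).mp hpq).symm⟩
    by_cases hmw : H.Adj m w
    · exact hwC (hnear g w hg (hTnA w hwT) (hTnB w hwT) ⟨m, hgm, hmw⟩).2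
    obtain ⟨n, hnT, hmn⟩ := cbs_exists_adj hT.1 hmT
    have hwn : H.Adj w n := (cbs_same hT.1 hmT hnT hwT hmw).mp hmn
    have hnC : n ∈ C := (hnear g n hg (hTnA n hnT) (hTnB n hnT) ⟨m, hgm, hmn⟩).2
    obtain ⟨q, hqG, hgq⟩ : ∃ q, (q ∈ A ∨ q ∈ B) ∧ H.Adj g q := by
      rcases hg with hgA | hgB
      · obtain ⟨q, hq, h⟩ := cbs_exists_adj hAbic.1 hgA
        exact ⟨q, Or.inl hq, h⟩
      · obtain ⟨q, hq, h⟩ := cbs_exists_adj hBbic.1 hgB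
        exact ⟨q, Or.inr hq, h⟩
    have hqm : ¬ H.Adj q m := by
      intro hqm
      have hqC := (hnearE q m hqG hmA hmB hqm).1
      exact cbs_tri hCbic.1 hqC hgC hmC hgq.symm hgm hqm
    have hqC : q ∈ C := (hnear q m hqG hmA hmB ⟨g, hgq.symm, hgm⟩).1
    have hqn : H.Adj q n := (cbs_same hCbic.1 hqC hnC hmC hqm).mpr hmn
    exact hwC (hnear q w hqG (hTnA w hwT) (hTnB w hwT) ⟨n, hqn, hwn.symm⟩).2
  -- Step 3: every biclique is A, B or C
  have hc0d0 : c0 = d0 := hinj (Subtype.ext hCD)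
  have hclos : ∀ y z : V, (y = u ∨ y = v ∨ y = c0) → G.Adj y z → (z = u ∨ z = v ∨ z = c0) := by
    intro y z hy hyz
    rcases hy with hy | hy | hy
    · rw [hy] at hyz
      rcases hAdju z hyz with h | h
      · exact Or.inr (Or.inl h)
      · exact Or.inr (Or.inr h)
    · rw [hy] at hyz
      rcases hAdjv z hyz with h | h
      · exact Or.inl h
      · exact Or.inr (Or.inr (h.trans hc0d0.symm))
    · rw [hy] at hyz
      have hadj : (KB H).Adj (iso c0) (iso z) := iso.map_adj_iff.mpr hyz
      rcases hCnb (iso z).1 (iso z).2 hadj.2 with h | h | h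
      · exact Or.inl (hinj (Subtype.ext h))
      · exact Or.inr (Or.inl (hinj (Subtype.ext h)))
      · exact Or.inr (Or.inr (hinj (Subtype.ext h)))
  have hclass : ∀ T : Set W, IsBiclique H T → T = A ∨ T = B ∨ T = C := by
    intro T hT
    have hreach : ∀ (y x : V), G.Walk y x → (y = u ∨ y = v ∨ y = c0) →
        (x = u ∨ x = v ∨ x = c0) := by
      intro y x p
      induction p with
      | nil => exact id
      | cons h p ih => exact fun hy => ih (hclos _ _ hy h)
    obtain ⟨p⟩ := hG.preconnected u (iso.symm ⟨T, hT⟩)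
    have hx := hreach _ _ p (Or.inl rfl)
    have hTe : (⟨T, hT⟩ : {S : Set W // IsBiclique H S}) = iso (iso.symm ⟨T, hT⟩) :=
      (iso.apply_symm_apply _).symm
    rcases hx with h | h | h
    · rw [h] at hTe; exact Or.inl (congrArg Subtype.val hTe)
    · rw [h] at hTe; exact Or.inr (Or.inl (congrArg Subtype.val hTe))
    · rw [h] at hTe; exact Or.inr (Or.inr (congrArg Subtype.val hTe))
  -- classification of vertices of G
  have hvert : ∀ x : V, x = u ∨ x = v ∨ x = c0 := by
    intro x
    rcases hclass (iso x).1 (iso x).2 with h | h | h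
    · exact Or.inl (hinj (Subtype.ext h))
    · exact Or.inr (Or.inl (hinj (Subtype.ext h)))
    · exact Or.inr (Or.inr (hinj (Subtype.ext h)))
  -- adjacency v -- c0
  have hvc0 : G.Adj v c0 := by
    have hBC : (B ∩ C).Nonempty := by
      rw [hCD]
      exact hadjBD.2
    have hne : (iso v) ≠ (iso c0) := fun h => hc0v (hinj h).symm
    exact iso.map_adj_iff.mp ⟨hne, hBC⟩
  have huc0' : u ≠ c0 := huc0.ne
  have huv' : u ≠ v := huv.ne
  -- build iso to K3
  let e : V ≃ Fin 3 :=
    { toFun := fun x => if x = u then 0 else if x = v then 1 else 2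
      invFun := ![u, v, c0]
      left_inv := by
        intro x
        rcases hvert x with rfl | rfl | rfl
        · simp
        · simp [huv'.symm]
        · simp [huc0'.symm, hc0v]
      right_inv := by
        intro i
        fin_cases i
        · simp
        · simp [huv'.symm]
        · simp [huc0'.symm, hc0v] }
  have e_u : e u = 0 := by simp [e]
  have e_v : e v = 1 := by simp [e, huv'.symm]
  have e_c0 : e c0 = 2 := by simp [e, huc0'.symm, hc0v]
  have isoK3 : G ≃g (⊤ : SimpleGraph (Fin 3)) :=
    { e with
      map_rel_iff' := by
        intro x y
        rcases hvert x with rfl | rfl | rfl <;> rcases hvert y with rfl | rfl | rfl <;>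
          simp [e_u, e_v, e_c0, top_adj, huv, huv.symm, huc0, huc0.symm, hvc0, hvc0.symm,
            G.irrefl] }
  exact hK3.false isoK3
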